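/- Pre-Iwasawa factorization: let S = [[A, B],[C, D]] ∈ Sp(n) be written in n×n blocks. Then AAᵀ + BBᵀ is symmetric positive definite, and setting L = (AAᵀ + BBᵀ)^{−1/2}, Q = (CAᵀ + DBᵀ)(AAᵀ + BBᵀ)⁻¹, E = LA and F = LB, one has: Q is symmetric, L is symmetric positive definite, R = [[E, F],[−F, E]] belongs to Sp(n) ∩ O(2n, ℝ), and S = [[I, 0],[Q, I]] · [[L⁻¹, 0],[0, L]] · R. Moreover this factorization is unique: if S = [[I, 0],[Q′, I]] · [[L′⁻¹, 0],[0, L′]] · R′ with Q′ symmetric, L′ symmetric positive definite and R′ ∈ Sp(n) ∩ O(2n, ℝ), then Q′ = Q, L′ = L and R′ = R. -/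

import Mathlib

open Matrix ComplexOrder MeasureTheory

noncomputable section

/-- Phase space ℝ^{2n} ≃ ℝⁿ × ℝⁿ, with coordinates z = (x,p). -/
abbrev PS (n : ℕ) := Fin n ⊕ Fin n → ℝ

/-- The standard symplectic matrix J = [[0, I], [-I, 0]]. -/
def Jmat (n : ℕ) : Matrix (Fin n ⊕ Fin n) (Fin n ⊕ Fin n) ℝ :=
  Matrix.fromBlocks 0 1 (-1) 0

/-- The standard symplectic form ω(z,z′) = (Jz)·z′. -/
def symp (n : ℕ) (z z' : PS n) : ℝ := (Jmat n).mulVec z ⬝ᵥ z'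

/-- The symplectic group Sp(n) = {S : SᵀJS = J}. -/
def Sp (n : ℕ) : Set (Matrix (Fin n ⊕ Fin n) (Fin n ⊕ Fin n) ℝ) :=
  {S | Sᵀ * Jmat n * S = Jmat n}

/-! The symplectic relations AᵀC = CᵀA, BᵀD = DᵀB, AᵀD − CᵀB = I and their counterparts for
Sᵀ ∈ Sp(n) carry the whole argument. Since A·Dᵀ − B·Cᵀ = I, the block row [A B] has a right
inverse, so P = AAᵀ + BBᵀ is positive definite. With X = CAᵀ + DBᵀ they give PC = XᵀA − B and
PD = XᵀB + A, hence PX = XᵀP, i.e. Q = XP⁻¹ is symmetric, and [C D] = Q[A B] + P⁻¹[−B A], which is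
the factorization. R is orthogonal because LPL = I and ABᵀ = BAᵀ, and symplectic because it
commutes with J.

For uniqueness, orthogonality of R′ gives SSᵀ = NNᵀ with N = [[L′⁻¹, 0], [Q′L′⁻¹, L′]]; its left
blocks read P = L′⁻², X = Q′P. Uniqueness of positive square roots gives L′ = L, then Q′ = Q, and
R′ = R by cancelling the invertible N. -/

section Blocks

variable {m α : Type*} [Fintype m] [DecidableEq m] [CommRing α]

theorem fromBlocks_mul_transpose_eq_one {E F : Matrix m m α}
    (h₁ : E * Eᵀ + F * Fᵀ = 1) (h₂ : E * Fᵀ = F * Eᵀ) :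
    fromBlocks E F (-F) E * (fromBlocks E F (-F) E)ᵀ = 1 := by
  rw [fromBlocks_transpose, fromBlocks_multiply, ← fromBlocks_one, fromBlocks_inj]
  simp only [transpose_neg, mul_neg, neg_mul, neg_neg]
  refine ⟨h₁, ?_, ?_, ?_⟩
  · rw [h₂, neg_add_cancel]
  · rw [h₂, neg_add_cancel]
  · rw [add_comm, h₁]

theorem isSymm_mul_inv_of_mul_eq {P X : Matrix m m α} (hP : P.IsSymm) (h : P * X = Xᵀ * P) :
    (X * P⁻¹).IsSymm := by
  by_cases hPu : IsUnit P.det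
  · rw [IsSymm, transpose_mul, transpose_nonsing_inv, hP.eq]
    calc P⁻¹ * Xᵀ = P⁻¹ * (Xᵀ * P) * P⁻¹ := by
          rw [mul_assoc, mul_assoc, mul_nonsing_inv _ hPu, mul_one]
      _ = X * P⁻¹ := by rw [← h, ← mul_assoc, nonsing_inv_mul _ hPu, one_mul]
  · simp [nonsing_inv_apply_not_isUnit _ hPu, IsSymm]

theorem fromBlocks_eq_lower_mul_diag_mul {A B Q M L : Matrix m m α} (hL : IsUnit L.det)
    (hM : L * L = M) :
    fromBlocks A B (Q * A - M * B) (Q * B + M * A) =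
      fromBlocks 1 0 Q 1 * fromBlocks L⁻¹ 0 0 L *
        fromBlocks (L * A) (L * B) (-(L * B)) (L * A) := by
  have hLinv : L⁻¹ * L = 1 := nonsing_inv_mul L hL
  simp only [fromBlocks_multiply, ← hM]
  congr 1
  · linear_combination (norm := noncomm_ring) -(hLinv * A)
  · linear_combination (norm := noncomm_ring) -(hLinv * B)
  · linear_combination (norm := noncomm_ring) -(Q * hLinv * A)
  · linear_combination (norm := noncomm_ring) -(Q * hLinv * B)

theorem isUnit_lower_mul_diag {Q L : Matrix m m α} (hL : IsUnit L.det) :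
    IsUnit (fromBlocks 1 0 Q 1 * fromBlocks L⁻¹ 0 0 L) := by
  simp [isUnit_iff_isUnit_det, hL]

theorem gram_eq_of_eq_lower_mul_diag_mul {A B C D Q L : Matrix m m α}
    {R : Matrix (m ⊕ m) (m ⊕ m) α} (hR : Rᵀ * R = 1)
    (h : fromBlocks A B C D = fromBlocks 1 0 Q 1 * fromBlocks L⁻¹ 0 0 L * R) :
    A * Aᵀ + B * Bᵀ = (Lᵀ * L)⁻¹ ∧ C * Aᵀ + D * Bᵀ = Q * (Lᵀ * L)⁻¹ := by
  have hSSt : fromBlocks A B C D * (fromBlocks A B C D)ᵀ =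
      fromBlocks 1 0 Q 1 * fromBlocks L⁻¹ 0 0 L *
        (fromBlocks 1 0 Q 1 * fromBlocks L⁻¹ 0 0 L)ᵀ := by
    rw [h, transpose_mul _ R, mul_assoc, ← mul_assoc R, mul_eq_one_comm.mp hR, one_mul]
  simp only [fromBlocks_transpose, fromBlocks_multiply, fromBlocks_inj, transpose_zero, one_mul,
    zero_mul, mul_zero, add_zero, zero_add] at hSSt
  obtain ⟨h₁₁, -, h₂₁, -⟩ := hSSt
  rw [Matrix.mul_inv_rev, ← transpose_nonsing_inv, ← mul_assoc]
  exact ⟨h₁₁, h₂₁⟩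

end Blocks

theorem posDef_mul_transpose_add_of_mul_add_mul_eq_one {m k : Type*} [Fintype m] [Fintype k]
    [DecidableEq m] {A B : Matrix m k ℝ} {X Y : Matrix k m ℝ} (h : A * X + B * Y = 1) :
    (A * Aᵀ + B * Bᵀ).PosDef := by
  have hinj : Function.Injective (fromCols A B).vecMul := fun x y hxy => by
    simpa only [vecMul_vecMul, fromCols_mul_fromRows, h, vecMul_one] using
      congrArg (· ᵥ* fromRows X Y) hxy
  simpa [transpose_fromCols, fromCols_mul_fromRows] using
    PosDef.mul_conjTranspose_self _ hinj

open scoped MatrixOrder in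
theorem Matrix.PosSemidef.eq_of_mul_self_eq {m 𝕜 : Type*} [Fintype m] [DecidableEq m] [RCLike 𝕜]
    {L L' : Matrix m m 𝕜}
    (hL : L.PosSemidef) (hL' : L'.PosSemidef) (h : L * L = L' * L') : L = L' :=
  (CFC.mul_self_eq_mul_self_iff L L' hL.nonneg hL'.nonneg).mp h

theorem Jmat_mul_self (n : ℕ) : Jmat n * Jmat n = -1 := by
  simp [Jmat, fromBlocks_multiply, ← fromBlocks_one, fromBlocks_neg]

theorem transpose_mem_Sp {n : ℕ} {S : Matrix (Fin n ⊕ Fin n) (Fin n ⊕ Fin n) ℝ} (hS : S ∈ Sp n) :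
    Sᵀ ∈ Sp n := by
  have hJ := Jmat_mul_self n
  have hS' : Sᵀ * Jmat n * S = Jmat n := hS
  have hinv : S * (-(Jmat n * Sᵀ * Jmat n)) = 1 :=
    mul_eq_one_comm.mp <| by linear_combination (norm := noncomm_ring) (-Jmat n) * hS' - hJ
  show Sᵀᵀ * Jmat n * Sᵀ = Jmat n
  rw [transpose_transpose]
  linear_combination (norm := noncomm_ring) (S * Jmat n * Sᵀ) * hJ - hinv * (-Jmat n)

theorem transpose_mem_Sp_iff {n : ℕ} {S : Matrix (Fin n ⊕ Fin n) (Fin n ⊕ Fin n) ℝ} :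
    Sᵀ ∈ Sp n ↔ S ∈ Sp n :=
  ⟨fun h => by simpa using transpose_mem_Sp h, transpose_mem_Sp⟩

theorem fromBlocks_mem_Sp_iff {n : ℕ} {A B C D : Matrix (Fin n) (Fin n) ℝ} :
    fromBlocks A B C D ∈ Sp n ↔ Aᵀ * C = Cᵀ * A ∧ Aᵀ * D - Cᵀ * B = 1 ∧ Bᵀ * D = Dᵀ * B := by
  have hblocks : (fromBlocks A B C D)ᵀ * Jmat n * fromBlocks A B C D =
      fromBlocks (Aᵀ * C - Cᵀ * A) (Aᵀ * D - Cᵀ * B) (-(Aᵀ * D - Cᵀ * B)ᵀ) (Bᵀ * D - Dᵀ * B) := by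
    simp only [Jmat, fromBlocks_transpose, fromBlocks_multiply, transpose_sub, transpose_mul,
      transpose_transpose]
    congr 1 <;> noncomm_ring
  rw [Sp, Set.mem_ofPred_eq, hblocks, Jmat, fromBlocks_inj, sub_eq_zero, sub_eq_zero]
  constructor
  · rintro ⟨h₁, h₂, -, h₄⟩
    exact ⟨h₁, h₂, h₄⟩
  · rintro ⟨h₁, h₂, h₄⟩
    exact ⟨h₁, h₂, by rw [h₂, transpose_one], h₄⟩

theorem fromBlocks_mem_Sp_iff' {n : ℕ} {A B C D : Matrix (Fin n) (Fin n) ℝ} :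
    fromBlocks A B C D ∈ Sp n ↔ A * Bᵀ = B * Aᵀ ∧ A * Dᵀ - B * Cᵀ = 1 ∧ C * Dᵀ = D * Cᵀ := by
  rw [← transpose_mem_Sp_iff, fromBlocks_transpose, fromBlocks_mem_Sp_iff]
  simp only [transpose_transpose]

theorem mem_Sp_of_commute {n : ℕ} {R : Matrix (Fin n ⊕ Fin n) (Fin n ⊕ Fin n) ℝ}
    (hR : Rᵀ * R = 1) (hJ : Commute (Jmat n) R) : R ∈ Sp n := by
  show Rᵀ * Jmat n * R = Jmat n
  rw [mul_assoc, hJ.eq, ← mul_assoc, hR, one_mul]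

theorem commute_Jmat_fromBlocks {n : ℕ} (E F : Matrix (Fin n) (Fin n) ℝ) :
    Commute (Jmat n) (fromBlocks E F (-F) E) := by
  simp [Commute, SemiconjBy, Jmat, fromBlocks_multiply]

section Symplectic

variable {n : ℕ} {A B C D : Matrix (Fin n) (Fin n) ℝ}

theorem gram_mul_lower_of_mem_Sp (hS : fromBlocks A B C D ∈ Sp n) :
    (A * Aᵀ + B * Bᵀ) * C = (C * Aᵀ + D * Bᵀ)ᵀ * A - B ∧
      (A * Aᵀ + B * Bᵀ) * D = (C * Aᵀ + D * Bᵀ)ᵀ * B + A := by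
  obtain ⟨hAC, hAD, hBD⟩ := fromBlocks_mem_Sp_iff.mp hS
  have hDA : Dᵀ * A - Bᵀ * C = 1 := by
    simpa only [transpose_sub, transpose_mul, transpose_transpose, transpose_one] using
      congrArg transpose hAD
  simp only [transpose_add, transpose_mul, transpose_transpose]
  constructor
  · linear_combination (norm := noncomm_ring) A * hAC - B * hDA
  · linear_combination (norm := noncomm_ring) A * hAD + B * hBD

theorem gram_mul_comm_of_mem_Sp (hS : fromBlocks A B C D ∈ Sp n) :
    (A * Aᵀ + B * Bᵀ) * (C * Aᵀ + D * Bᵀ) = (C * Aᵀ + D * Bᵀ)ᵀ * (A * Aᵀ + B * Bᵀ) := by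
  obtain ⟨hC, hD⟩ := gram_mul_lower_of_mem_Sp hS
  obtain ⟨hAB, -, -⟩ := fromBlocks_mem_Sp_iff'.mp hS
  linear_combination (norm := noncomm_ring) hC * Aᵀ + hD * Bᵀ + hAB

theorem posDef_gram_of_mem_Sp (hS : fromBlocks A B C D ∈ Sp n) : (A * Aᵀ + B * Bᵀ).PosDef := by
  obtain ⟨-, hAD, -⟩ := fromBlocks_mem_Sp_iff'.mp hS
  exact posDef_mul_transpose_add_of_mul_add_mul_eq_one (X := Dᵀ) (Y := -Cᵀ)
    (by rw [mul_neg, ← sub_eq_add_neg, hAD])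

theorem isSymm_mul_gram_inv_of_mem_Sp (hS : fromBlocks A B C D ∈ Sp n) :
    ((C * Aᵀ + D * Bᵀ) * (A * Aᵀ + B * Bᵀ)⁻¹).IsSymm :=
  isSymm_mul_inv_of_mul_eq (isHermitian_iff_isSymm.mp (posDef_gram_of_mem_Sp hS).isHermitian)
    (gram_mul_comm_of_mem_Sp hS)

theorem lower_eq_of_mem_Sp (hS : fromBlocks A B C D ∈ Sp n) :
    C = (C * Aᵀ + D * Bᵀ) * (A * Aᵀ + B * Bᵀ)⁻¹ * A - (A * Aᵀ + B * Bᵀ)⁻¹ * B ∧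
      D = (C * Aᵀ + D * Bᵀ) * (A * Aᵀ + B * Bᵀ)⁻¹ * B + (A * Aᵀ + B * Bᵀ)⁻¹ * A := by
  have hP := posDef_gram_of_mem_Sp hS
  have hQ := isSymm_mul_gram_inv_of_mem_Sp hS
  rw [IsSymm, transpose_mul, transpose_nonsing_inv,
    isHermitian_iff_isSymm.mp hP.isHermitian |>.eq] at hQ
  have hPu : IsUnit (A * Aᵀ + B * Bᵀ).det := (isUnit_iff_isUnit_det _).mp hP.isUnit
  obtain ⟨hC, hD⟩ := gram_mul_lower_of_mem_Sp hS
  rw [← hQ, mul_assoc, mul_assoc, ← mul_sub, ← mul_add, ← hC, ← hD,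
    nonsing_inv_mul_cancel_left _ _ hPu, nonsing_inv_mul_cancel_left _ _ hPu]
  exact ⟨rfl, rfl⟩

theorem fromBlocks_mul_transpose_eq_one_of_mem_Sp (hS : fromBlocks A B C D ∈ Sp n)
    {L : Matrix (Fin n) (Fin n) ℝ} (hL : L.IsSymm) (hLsq : L * L = (A * Aᵀ + B * Bᵀ)⁻¹) :
    fromBlocks (L * A) (L * B) (-(L * B)) (L * A) *
      (fromBlocks (L * A) (L * B) (-(L * B)) (L * A))ᵀ = 1 := by
  have hPu : IsUnit (A * Aᵀ + B * Bᵀ).det :=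
    (isUnit_iff_isUnit_det _).mp (posDef_gram_of_mem_Sp hS).isUnit
  have hLPL : L * (A * Aᵀ + B * Bᵀ) * L = 1 :=
    mul_eq_one_comm.mp (by rw [← mul_assoc, hLsq, nonsing_inv_mul _ hPu])
  obtain ⟨hAB, -, -⟩ := fromBlocks_mem_Sp_iff'.mp hS
  apply fromBlocks_mul_transpose_eq_one <;> simp only [transpose_mul, hL.eq]
  · linear_combination (norm := noncomm_ring) hLPL
  · linear_combination (norm := noncomm_ring) L * hAB * L

theorem fromBlocks_eq_lower_mul_diag_mul_of_mem_Sp (hS : fromBlocks A B C D ∈ Sp n)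
    {L : Matrix (Fin n) (Fin n) ℝ} (hL : IsUnit L.det) (hLsq : L * L = (A * Aᵀ + B * Bᵀ)⁻¹) :
    fromBlocks A B C D =
      fromBlocks 1 0 ((C * Aᵀ + D * Bᵀ) * (A * Aᵀ + B * Bᵀ)⁻¹) 1 * fromBlocks L⁻¹ 0 0 L *
        fromBlocks (L * A) (L * B) (-(L * B)) (L * A) := by
  obtain ⟨hC, hD⟩ := lower_eq_of_mem_Sp hS
  refine Eq.trans ?_ (fromBlocks_eq_lower_mul_diag_mul hL hLsq)
  rw [← hC, ← hD]

end Symplectic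

theorem pre_iwasawa_factorization (n : ℕ) (A B C D : Matrix (Fin n) (Fin n) ℝ)
    (hS : Matrix.fromBlocks A B C D ∈ Sp n) :
    (A * Aᵀ + B * Bᵀ).PosDef ∧
    ∀ L : Matrix (Fin n) (Fin n) ℝ, L.PosDef → L * L = (A * Aᵀ + B * Bᵀ)⁻¹ →
      (((C * Aᵀ + D * Bᵀ) * (A * Aᵀ + B * Bᵀ)⁻¹).IsSymm ∧
       Matrix.fromBlocks (L * A) (L * B) (-(L * B)) (L * A) ∈ Sp n ∧
       (Matrix.fromBlocks (L * A) (L * B) (-(L * B)) (L * A))ᵀ *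
          Matrix.fromBlocks (L * A) (L * B) (-(L * B)) (L * A) = 1 ∧
       Matrix.fromBlocks A B C D =
         Matrix.fromBlocks 1 0 ((C * Aᵀ + D * Bᵀ) * (A * Aᵀ + B * Bᵀ)⁻¹) 1 *
           Matrix.fromBlocks L⁻¹ 0 0 L *
           Matrix.fromBlocks (L * A) (L * B) (-(L * B)) (L * A)) ∧
      (∀ Q' L' : Matrix (Fin n) (Fin n) ℝ,
        ∀ R' : Matrix (Fin n ⊕ Fin n) (Fin n ⊕ Fin n) ℝ,
        Q'.IsSymm → L'.PosDef → R' ∈ Sp n → R'ᵀ * R' = 1 →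
        Matrix.fromBlocks A B C D =
          Matrix.fromBlocks 1 0 Q' 1 * Matrix.fromBlocks L'⁻¹ 0 0 L' * R' →
        Q' = (C * Aᵀ + D * Bᵀ) * (A * Aᵀ + B * Bᵀ)⁻¹ ∧ L' = L ∧
          R' = Matrix.fromBlocks (L * A) (L * B) (-(L * B)) (L * A)) := by
  have hP := posDef_gram_of_mem_Sp hS
  have hPu : IsUnit (A * Aᵀ + B * Bᵀ).det := (isUnit_iff_isUnit_det _).mp hP.isUnit
  refine ⟨hP, fun L hL hLsq => ?_⟩
  have hLu : IsUnit L.det := (isUnit_iff_isUnit_det _).mp hL.isUnit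
  have hRO := mul_eq_one_comm.mp <|
    fromBlocks_mul_transpose_eq_one_of_mem_Sp hS (isHermitian_iff_isSymm.mp hL.isHermitian) hLsq
  have hfact := fromBlocks_eq_lower_mul_diag_mul_of_mem_Sp hS hLu hLsq
  refine ⟨⟨isSymm_mul_gram_inv_of_mem_Sp hS, mem_Sp_of_commute hRO (commute_Jmat_fromBlocks _ _),
    hRO, hfact⟩, fun Q' L' R' _ hL' _ hR' hS' => ?_⟩
  have hL'u : IsUnit L'.det := (isUnit_iff_isUnit_det _).mp hL'.isUnit
  obtain ⟨hPL', hXL'⟩ := gram_eq_of_eq_lower_mul_diag_mul hR' hS'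
  rw [isHermitian_iff_isSymm.mp hL'.isHermitian |>.eq] at hPL' hXL'
  obtain rfl : L' = L := hL'.posSemidef.eq_of_mul_self_eq hL.posSemidef <| by
    rw [hLsq, hPL', nonsing_inv_nonsing_inv _ (by rw [det_mul]; exact hL'u.mul hL'u)]
  obtain rfl : Q' = (C * Aᵀ + D * Bᵀ) * (A * Aᵀ + B * Bᵀ)⁻¹ := by
    rw [hXL', ← hPL', mul_nonsing_inv_cancel_right _ _ hPu]
  exact ⟨rfl, rfl, (isUnit_lower_mul_diag hLu).mul_left_cancel (hS'.symm.trans hfact)⟩
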